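/- Let n, m ≥ 1 and x ∈ {0,1}. Consider registers A_1, B_1, …, B_n, A_2, C_1, …, C_m and the state |GHZ_{n+1}⟩_{A_1 B_1 … B_n} ⊗ |GHZ_{m+1}⟩_{A_2 C_1 … C_m}. Then ( ⟨x|_{A_2} ⊗ I on all other registers ) ( CNOT_{A_1 → A_2} ⊗ I ) ( |GHZ_{n+1}⟩_{A_1 B_{1:n}} ⊗ |GHZ_{m+1}⟩_{A_2 C_{1:m}} ) = (1/√2) · ( X^x_{C_1} ⊗ … ⊗ X^x_{C_m} applied to ) |GHZ_{n+m+1}⟩_{A_1 B_1 … B_n C_1 … C_m}. Consequently, Protocol 5 deterministically fuses the two GHZ states into |GHZ_{n+m+1}⟩ after the Pauli-X corrections. -/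
import Mathlib


open Matrix

/-- Basis labels for the registers `A_1, B_1, …, B_n, A_2, C_1, …, C_m`:
`(a₁, b, a₂, c)`. -/
abbrev Basis2 (n m : ℕ) : Type :=
  Fin 2 × (Fin n → Fin 2) × Fin 2 × (Fin m → Fin 2)

/-- Basis labels for the output registers `A_1, B_1, …, B_n, C_1, …, C_m`. -/
abbrev OutBasis2 (n m : ℕ) : Type := Fin 2 × (Fin n → Fin 2) × (Fin m → Fin 2)

/-- Amplitude of `|GHZ_{k+1}⟩` on one qubit plus a `k`-qubit block. -/
noncomputable def ghzBlk (k : ℕ) : Fin 2 × (Fin k → Fin 2) → ℂ := fun u =>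
  ((if u.1 = 0 ∧ (∀ j, u.2 j = 0) then 1 else 0) +
      (if u.1 = 1 ∧ (∀ j, u.2 j = 1) then 1 else 0)) / (Real.sqrt 2 : ℂ)

/-- Amplitude of `|GHZ_{n+m+1}⟩` on registers `A_1, B_1, …, B_n, C_1, …, C_m`. -/
noncomputable def ghzFull (n m : ℕ) : OutBasis2 n m → ℂ := fun u =>
  ((if u.1 = 0 ∧ (∀ j, u.2.1 j = 0) ∧ (∀ j, u.2.2 j = 0) then 1 else 0) +
      (if u.1 = 1 ∧ (∀ j, u.2.1 j = 1) ∧ (∀ j, u.2.2 j = 1) then 1 else 0)) /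
    (Real.sqrt 2 : ℂ)

/-- The initial state `|GHZ_{n+1}⟩_{A_1 B_1 ⋯ B_n} ⊗ |GHZ_{m+1}⟩_{A_2 C_1 ⋯ C_m}`. -/
noncomputable def initState (n m : ℕ) : Basis2 n m → ℂ := fun p =>
  ghzBlk n (p.1, p.2.1) * ghzBlk m (p.2.2.1, p.2.2.2)

/-- `CNOT_{A_1 → A_2} ⊗ I`: `|0⟩⟨0|_{A_1} ⊗ I_{A_2} + |1⟩⟨1|_{A_1} ⊗ X_{A_2}`
on the qubits `A_1, A_2`, identity on all other registers. -/
noncomputable def cnot12 (n m : ℕ) : Matrix (Basis2 n m) (Basis2 n m) ℂ :=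
  Matrix.of fun p q =>
    if p.1 = q.1 ∧ p.2.1 = q.2.1 ∧ p.2.2.1 = q.2.2.1 + q.1 ∧ p.2.2.2 = q.2.2.2
    then (1 : ℂ) else 0

lemma fin2_addself : ∀ a b : Fin 2, a + b + b = a := by decide

lemma cnot12_mulVec (n m : ℕ) (p : Basis2 n m) :
    (cnot12 n m).mulVec (initState n m) p
      = initState n m (p.1, p.2.1, p.2.2.1 + p.1, p.2.2.2) := by
  classical
  simp only [Matrix.mulVec, dotProduct, cnot12, Matrix.of_apply, ite_mul, one_mul,
    zero_mul]
  rw [Fintype.sum_eq_single (p.1, p.2.1, p.2.2.1 + p.1, p.2.2.2)]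
  · rw [if_pos]
    exact ⟨rfl, rfl, (fin2_addself p.2.2.1 p.1).symm, rfl⟩
  · rintro ⟨a, b, c, d⟩ hq
    rw [if_neg]
    rintro ⟨h1, h2, h3, h4⟩
    apply hq
    simp only [Prod.mk.injEq]
    refine ⟨h1.symm, h2.symm, ?_, h4.symm⟩
    rw [h3, h1, fin2_addself]

lemma fin2_iff1 : ∀ a : Fin 2, a + 1 = 0 ↔ a = 1 := by decide
lemma fin2_iff2 : ∀ a : Fin 2, a + 1 = 1 ↔ a = 0 := by decide

lemma sqrt2C : (Real.sqrt 2 : ℂ) * (Real.sqrt 2 : ℂ) = 2 := by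
  norm_cast
  rw [Real.mul_self_sqrt (by norm_num)]

lemma sqrt2C_ne : (Real.sqrt 2 : ℂ) ≠ 0 := by
  intro h
  have := sqrt2C
  rw [h] at this
  norm_num at this

lemma key (P Q : Prop) [Decidable P] [Decidable Q] :
    (if P then (1:ℂ) else 0) / (Real.sqrt 2 : ℂ) * ((if Q then (1:ℂ) else 0) / (Real.sqrt 2 : ℂ))
      = ((Real.sqrt 2 : ℂ))⁻¹ * ((if P ∧ Q then (1:ℂ) else 0) / (Real.sqrt 2 : ℂ)) := by
  have h := sqrt2C
  have h0 := sqrt2C_ne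
  by_cases hP : P <;> by_cases hQ : Q <;>
    simp [hP, hQ] <;> field_simp

/-- **Protocol 5: fusion of two GHZ states.**
For `n, m ≥ 1` and any measurement outcome `x ∈ {0,1}`, contracting register `A_2`
of `(CNOT_{A_1→A_2} ⊗ I)(|GHZ_{n+1}⟩ ⊗ |GHZ_{m+1}⟩)` with the computational bra
`⟨x|` gives `(1/√2)` times `|GHZ_{n+m+1}⟩_{A_1 B_{1:n} C_{1:m}}` with `X^x` applied
to each of `C_1, …, C_m`. -/
theorem ghz_fusion (n m : ℕ) (hn : 1 ≤ n) (hm : 1 ≤ m) (x : Fin 2) :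
    (fun o : OutBasis2 n m =>
        ((cnot12 n m).mulVec (initState n m)) (o.1, o.2.1, x, o.2.2))
      = fun o : OutBasis2 n m =>
          ((Real.sqrt 2 : ℂ))⁻¹ * ghzFull n m (o.1, o.2.1, fun j => o.2.2 j + x) := by
  funext o
  obtain ⟨a, b, c⟩ := o
  rw [cnot12_mulVec]
  simp only [initState, ghzBlk, ghzFull]
  fin_cases a <;> fin_cases x <;>
    simp only [Fin.mk_zero, Fin.mk_one, show ((0:Fin 2) + 0) = 0 from rfl, show ((1:Fin 2) + 0) = 1 from rfl,
      show ((0:Fin 2) + 1) = 1 from rfl, show ((1:Fin 2) + 1) = 0 from rfl,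
      add_zero, fin2_iff1, fin2_iff2] <;>
    simp only [show (0:Fin 2) ≠ 1 from by decide, show (1:Fin 2) ≠ 0 from by decide,
      false_and, true_and, if_false, add_zero, zero_add] <;>
    [exact key _ _; exact key _ _; exact key _ _; exact key _ _]
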